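/- arXiv:1202.5908 — 2 statements merged into one kernel-verified Lean document; each statement's English description precedes it below -/
import Mathlib

section
/- There exists a constant C, independent of ε and N, such that ‖(E_1 − E_1^I)_y‖_{L^∞(Ω_2)} ≤ C N^{-5/2} and ‖(E_12 − E_12^I)_y‖_{L^∞(Ω_2)} ≤ C ε^{-1/2} N^{-5/2}, where the subscript y denotes the partial derivative with respect to y (taken rectangle-by-rectangle for the piecewise bilinear interpolant, i.e. an essential supremum). -/
open MeasureTheory Real Set

noncomputable section

/-- First-order partial derivative in the x-direction. -/
def pdx (f : ℝ × ℝ → ℝ) : ℝ × ℝ → ℝ := fun p => fderiv ℝ f p (1, 0)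

/-- First-order partial derivative in the y-direction. -/
def pdy (f : ℝ × ℝ → ℝ) : ℝ × ℝ → ℝ := fun p => fderiv ℝ f p (0, 1)

/-- Mixed partial derivative `∂_x^i ∂_y^j`. -/
def pd (i j : ℕ) (f : ℝ × ℝ → ℝ) : ℝ × ℝ → ℝ := pdx^[i] (pdy^[j] f)

/-- A function coincides with a bilinear polynomial `a + bx + cy + dxy` on a set. -/
def IsBilinearOn (f : ℝ × ℝ → ℝ) (s : Set (ℝ × ℝ)) : Prop :=
  ∃ a b c d : ℝ, ∀ p ∈ s, f p = a + b * p.1 + c * p.2 + d * (p.1 * p.2)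

/-- The Shishkin-mesh node abscissas. -/
def meshX (N : ℕ) (lx : ℝ) (i : ℕ) : ℝ :=
  if i ≤ N / 2 then 2 * (i : ℝ) * (1 - lx) / (N : ℝ)
  else 1 - 2 * ((N : ℝ) - (i : ℝ)) * lx / (N : ℝ)

/-- The Shishkin-mesh node ordinates. -/
def meshY (N : ℕ) (ly : ℝ) (j : ℕ) : ℝ :=
  if j ≤ N / 3 then 3 * (j : ℝ) * ly / (N : ℝ)
  else if j ≤ 2 * N / 3 then
    (3 * (j : ℝ) / (N : ℝ) - 1) - 3 * (2 * (j : ℝ) - (N : ℝ)) * ly / (N : ℝ)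
  else 1 - 3 * ((N : ℝ) - (j : ℝ)) * ly / (N : ℝ)

/-- The mesh rectangle `τ_{ij} = [x_{i-1}, x_i] × [y_{j-1}, y_j]`. -/
def meshRect (N : ℕ) (lx ly : ℝ) (i j : ℕ) : Set (ℝ × ℝ) :=
  Icc (meshX N lx (i - 1)) (meshX N lx i) ×ˢ Icc (meshY N ly (j - 1)) (meshY N ly j)

def OmegaS (lx ly : ℝ) : Set (ℝ × ℝ) := Icc 0 (1 - lx) ×ˢ Icc ly (1 - ly)
def Omega1R (lx ly : ℝ) : Set (ℝ × ℝ) := Icc (1 - lx) 1 ×ˢ Icc ly (1 - ly)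
def Omega2R (lx ly : ℝ) : Set (ℝ × ℝ) := Icc 0 (1 - lx) ×ˢ (Icc 0 ly ∪ Icc (1 - ly) 1)
def Omega12R (lx ly : ℝ) : Set (ℝ × ℝ) := Icc (1 - lx) 1 ×ˢ (Icc 0 ly ∪ Icc (1 - ly) 1)

/-- Basic assumptions on the Shishkin mesh data (with `ρ = 2.5`). -/
def ShishkinHyp (N : ℕ) (ε β lx ly : ℝ) : Prop :=
  0 < N ∧ 6 ∣ N ∧ 0 < ε ∧ ε ≤ (N : ℝ)⁻¹ ∧ 0 < β ∧
  lx = 2.5 * ε / β * Real.log (N : ℝ) ∧ ly = 2.5 * Real.sqrt ε * Real.log (N : ℝ) ∧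
  lx ≤ 1 / 2 ∧ ly ≤ 1 / 4

/-- `gI` is the piecewise-bilinear nodal interpolant of `g` on the Shishkin mesh. -/
def IsMeshInterpolant (N : ℕ) (lx ly : ℝ) (g gI : ℝ × ℝ → ℝ) : Prop :=
  Continuous gI ∧
  (∀ i j : ℕ, 1 ≤ i → i ≤ N → 1 ≤ j → j ≤ N → IsBilinearOn gI (meshRect N lx ly i j)) ∧
  (∀ i j : ℕ, i ≤ N → j ≤ N →
    gI (meshX N lx i, meshY N ly j) = g (meshX N lx i, meshY N ly j))

def UnitSq : Set (ℝ × ℝ) := Icc 0 1 ×ˢ Icc 0 1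

/-- Bounds on the regular part `S` of the solution decomposition. -/
def BoundS (C0 : ℝ) (S : ℝ × ℝ → ℝ) : Prop :=
  ContDiff ℝ 3 S ∧ ∀ i j : ℕ, i + j ≤ 3 → ∀ p ∈ UnitSq, |pd i j S p| ≤ C0

/-- Bounds on the exponential-layer part `E₁`. -/
def BoundE1 (ε β C0 : ℝ) (E1 : ℝ × ℝ → ℝ) : Prop :=
  ContDiff ℝ 3 E1 ∧ ∀ i j : ℕ, i + j ≤ 3 → ∀ p ∈ UnitSq,
    |pd i j E1 p| ≤ C0 * ε ^ (-(i : ℝ)) * Real.exp (-β * (1 - p.1) / ε)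

/-- Bounds on the characteristic-layer part `E₂`. -/
def BoundE2 (ε C0 : ℝ) (E2 : ℝ × ℝ → ℝ) : Prop :=
  ContDiff ℝ 3 E2 ∧ ∀ i j : ℕ, i + j ≤ 3 → ∀ p ∈ UnitSq,
    |pd i j E2 p| ≤ C0 * ε ^ (-(j : ℝ) / 2) *
      (Real.exp (-p.2 / Real.sqrt ε) + Real.exp (-(1 - p.2) / Real.sqrt ε))

/-- Bounds on the corner-layer part `E₁₂`. -/
def BoundE12 (ε β C0 : ℝ) (E12 : ℝ × ℝ → ℝ) : Prop :=
  ContDiff ℝ 3 E12 ∧ ∀ i j : ℕ, i + j ≤ 3 → ∀ p ∈ UnitSq,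
    |pd i j E12 p| ≤ C0 * ε ^ (-((i : ℝ) + (j : ℝ) / 2)) * Real.exp (-β * (1 - p.1) / ε) *
      (Real.exp (-p.2 / Real.sqrt ε) + Real.exp (-(1 - p.2) / Real.sqrt ε))

/-- Membership in the bilinear finite element space `V^N`. -/
def MemVN (N : ℕ) (lx ly : ℝ) (v : ℝ × ℝ → ℝ) : Prop :=
  Continuous v ∧
  (∀ p ∈ UnitSq, (p.1 = 0 ∨ p.1 = 1 ∨ p.2 = 0 ∨ p.2 = 1) → v p = 0) ∧
  ∀ i j : ℕ, 1 ≤ i → i ≤ N → 1 ≤ j → j ≤ N → IsBilinearOn v (meshRect N lx ly i j)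

/-- The SDFEM stabilization parameter `δ`. -/
def sdDelta (N : ℕ) (lx ly Cstar : ℝ) : ℝ × ℝ → ℝ :=
  (OmegaS lx ly ∪ Omega2R lx ly).indicator fun _ => Cstar / (N : ℝ)

/-- The SDFEM bilinear form `B`. -/
def Bform (N : ℕ) (lx ly ε b c Cstar : ℝ) (v w : ℝ × ℝ → ℝ) : ℝ :=
  ∫ p in UnitSq,
    (ε * (pdx v p * pdx w p + pdy v p * pdy w p)
      + (b * pdx v p + c * v p) * w p
      + (b * pdx v p + c * v p) * (sdDelta N lx ly Cstar p * (b * pdx w p)))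

/-- The square of the SDFEM energy norm `|||·|||`. -/
def energySq (N : ℕ) (lx ly ε b c Cstar : ℝ) (v : ℝ × ℝ → ℝ) : ℝ :=
  ∫ p in UnitSq,
    ((ε + b ^ 2 * sdDelta N lx ly Cstar p) * pdx v p ^ 2
      + ε * pdy v p ^ 2 + c * v p ^ 2)

/-- The neighbourhood `Ω₀` of the point `(xs, ys)`. -/
def OmegaZero (N : ℕ) (xs ys K sx sy : ℝ) : Set (ℝ × ℝ) :=
  {p : ℝ × ℝ | p ∈ Ioo (0 : ℝ) 1 ×ˢ Ioo (0 : ℝ) 1 ∧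
    p.1 - xs ≤ K * sx * Real.log (N : ℝ) ∧ |p.2 - ys| ≤ K * sy * Real.log (N : ℝ)}

/-- `Ω₀'`: the smallest union of mesh rectangles containing `Ω₀`. -/
def OmegaZero' (N : ℕ) (lx ly xs ys K sx sy : ℝ) : Set (ℝ × ℝ) :=
  ⋃ i ∈ Finset.Icc 1 N, ⋃ j ∈ Finset.Icc 1 N,
    ⋃ (_ : volume (OmegaZero N xs ys K sx sy ∩ meshRect N lx ly i j) ≠ 0),
      meshRect N lx ly i j

/-!
On a mesh cell the `y`-derivative of the bilinear interpolant `g^I` is affine in `x`, and on each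
vertical edge of the cell it is a difference quotient of `g` in `y`, hence by the mean value theorem
a value of `∂_y g` on that edge. So on every cell `|∂_y (g - g^I)| ≤ 2 sup |∂_y g|` over the cell.
The cells meeting `Ω₂` lie in `x ≤ 1 - λ_x`, where the layer factor satisfies
`e^{-β(1-x)/ε} ≤ e^{-βλ_x/ε} = N^{-5/2}`, while the factor in `y` of `E₁₂` is at most `2`.
-/

section BilinearInterpolation

open ContinuousLinearMap Filter Topology

variable {f g : ℝ × ℝ → ℝ}

lemma abs_affine_le_of_mem_Icc {c d x₀ x₁ x M : ℝ} (hx : x ∈ Icc x₀ x₁)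
    (h₀ : |c + d * x₀| ≤ M) (h₁ : |c + d * x₁| ≤ M) : |c + d * x| ≤ M := by
  rcases le_total 0 d with hd | hd
  · exact (abs_le_max_abs_abs (by nlinarith [hx.1]) (by nlinarith [hx.2])).trans (max_le h₀ h₁)
  · exact (abs_le_max_abs_abs (by nlinarith [hx.2]) (by nlinarith [hx.1])).trans (max_le h₁ h₀)

lemma hasDerivAt_pdy {x y : ℝ} (hf : DifferentiableAt ℝ f (x, y)) :
    HasDerivAt (fun t => f (x, t)) (pdy f (x, y)) y :=
  hf.hasFDerivAt.comp_hasDerivAt y ((hasDerivAt_const y x).prodMk (hasDerivAt_id y))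

lemma exists_pdy_mul_eq_sub (hf : Differentiable ℝ f) (x : ℝ) {y₀ y₁ : ℝ} (hy : y₀ < y₁) :
    ∃ η ∈ Ioo y₀ y₁, pdy f (x, η) * (y₁ - y₀) = f (x, y₁) - f (x, y₀) := by
  obtain ⟨η, hη, hslope⟩ := exists_hasDerivAt_eq_slope (fun t => f (x, t))
    (fun t => pdy f (x, t)) hy (fun _ _ => (hasDerivAt_pdy (hf _)).continuousAt.continuousWithinAt)
    (fun _ _ => hasDerivAt_pdy (hf _))
  exact ⟨η, hη, by rw [hslope, div_mul_cancel₀ _ (sub_ne_zero.2 hy.ne')]⟩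

lemma hasFDerivAt_of_eqOn_bilinear {s : Set (ℝ × ℝ)} {p : ℝ × ℝ} {a b c d : ℝ} (hs : s ∈ 𝓝 p)
    (hg : ∀ q ∈ s, g q = a + b * q.1 + c * q.2 + d * (q.1 * q.2)) :
    HasFDerivAt g ((b + d * p.2) • fst ℝ ℝ ℝ + (c + d * p.1) • snd ℝ ℝ ℝ) p := by
  have hx : HasFDerivAt (fun q : ℝ × ℝ => q.1) (fst ℝ ℝ ℝ) p := hasFDerivAt_fst
  have hy : HasFDerivAt (fun q : ℝ × ℝ => q.2) (snd ℝ ℝ ℝ) p := hasFDerivAt_snd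
  have hpoly := (((hasFDerivAt_const a p).add (hx.const_mul b)).add (hy.const_mul c)).add
    ((hx.mul hy).const_mul d)
  refine (hpoly.congr_of_eventuallyEq (eventuallyEq_of_mem hs hg)).congr_fderiv ?_
  ext <;> simp

theorem abs_pdy_sub_bilinear_interp_le {x₀ x₁ y₀ y₁ M : ℝ} (hf : Differentiable ℝ f)
    (hg : IsBilinearOn g (Icc x₀ x₁ ×ˢ Icc y₀ y₁))
    (h₀₀ : g (x₀, y₀) = f (x₀, y₀)) (h₀₁ : g (x₀, y₁) = f (x₀, y₁))
    (h₁₀ : g (x₁, y₀) = f (x₁, y₀)) (h₁₁ : g (x₁, y₁) = f (x₁, y₁))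
    (hM : ∀ q ∈ Icc x₀ x₁ ×ˢ Icc y₀ y₁, |pdy f q| ≤ M)
    {p : ℝ × ℝ} (hp : p ∈ interior (Icc x₀ x₁ ×ˢ Icc y₀ y₁)) :
    |pdy (fun q => f q - g q) p| ≤ 2 * M := by
  obtain ⟨a, b, c, d, hg⟩ := hg
  have hL := hasFDerivAt_of_eqOn_bilinear (mem_interior_iff_mem_nhds.1 hp) hg
  have hpdy : pdy (fun q => f q - g q) p = pdy f p - (c + d * p.1) := by
    change fderiv ℝ (fun q => f q - g q) p (0, 1) = _
    rw [((hf p).hasFDerivAt.fun_sub hL).fderiv]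
    simp [pdy]
  rw [interior_prod_eq, interior_Icc, interior_Icc] at hp
  obtain ⟨⟨hx₀, hx₁⟩, hy₀, hy₁⟩ := hp
  have hy : y₀ < y₁ := hy₀.trans hy₁
  have edge : ∀ x ∈ Icc x₀ x₁, g (x, y₀) = f (x, y₀) → g (x, y₁) = f (x, y₁) →
      |c + d * x| ≤ M := by
    intro x hx h₀ h₁
    obtain ⟨η, hη, hslope⟩ := exists_pdy_mul_eq_sub hf x hy
    have hcd : c + d * x = pdy f (x, η) := by
      refine mul_right_cancel₀ (sub_ne_zero.2 hy.ne') ?_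
      rw [hslope, ← h₀, ← h₁, hg _ ⟨hx, hy.le, le_rfl⟩, hg _ ⟨hx, le_rfl, hy.le⟩]
      ring
    exact hcd ▸ hM _ ⟨hx, Ioo_subset_Icc_self hη⟩
  have hx : x₀ ≤ x₁ := (hx₀.trans hx₁).le
  calc |pdy (fun q => f q - g q) p| ≤ |pdy f p| + |c + d * p.1| := hpdy ▸ abs_sub _ _
    _ ≤ M + M := add_le_add (hM p ⟨⟨hx₀.le, hx₁.le⟩, hy₀.le, hy₁.le⟩)
        (abs_affine_le_of_mem_Icc ⟨hx₀.le, hx₁.le⟩ (edge x₀ ⟨le_rfl, hx⟩ h₀₀ h₀₁)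
          (edge x₁ ⟨hx, le_rfl⟩ h₁₀ h₁₁))
    _ = 2 * M := (two_mul M).symm

end BilinearInterpolation

section ShishkinMesh

variable {N : ℕ} {lx ly : ℝ}

lemma meshX_mem_Icc (hN : 0 < N) (hlx : lx ≤ 1) {i : ℕ} (hi : i ≤ N / 2) :
    meshX N lx i ∈ Icc 0 (1 - lx) := by
  have hN' : (0 : ℝ) < N := Nat.cast_pos.2 hN
  have h2i : 2 * (i : ℝ) ≤ N := by exact_mod_cast (Nat.mul_div_le N 2).trans' (by omega)
  rw [meshX, if_pos hi]
  constructor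
  · exact div_nonneg (mul_nonneg (by positivity) (by linarith)) hN'.le
  · rw [div_le_iff₀ hN']
    nlinarith

lemma one_sub_le_meshX (hN : 0 < N) (hN2 : Even N) (hlx : 0 ≤ lx) {i : ℕ} (hi : N / 2 ≤ i)
    (hiN : i ≤ N) : 1 - lx ≤ meshX N lx i := by
  have hN' : (0 : ℝ) < N := Nat.cast_pos.2 hN
  obtain ⟨k, rfl⟩ := hN2
  rw [meshX]
  split_ifs with h
  · obtain rfl : i = k := by omega
    rw [le_div_iff₀ hN']
    push_cast
    linarith
  · have : (k : ℝ) + 1 ≤ i := by exact_mod_cast (by omega : k + 1 ≤ i)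
    have : (i : ℝ) ≤ k + k := by exact_mod_cast hiN
    rw [sub_le_sub_iff_left, div_le_iff₀ hN']
    push_cast
    nlinarith

lemma meshY_mem_Icc (hN : 0 < N) (hly : 0 ≤ ly) (hly' : ly ≤ 1 / 2) {j : ℕ} (hj : j ≤ N) :
    meshY N ly j ∈ Icc 0 1 := by
  have hN' : (0 : ℝ) < N := Nat.cast_pos.2 hN
  have hjN : (j : ℝ) ≤ N := by exact_mod_cast hj
  rw [meshY]
  split_ifs with h₁ h₂
  · have : 3 * (j : ℝ) ≤ N := by exact_mod_cast (Nat.mul_div_le N 3).trans' (by omega)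
    constructor
    · positivity
    · rw [div_le_one hN']
      nlinarith
  · -- with `t = 3j/N ∈ [1, 2]` the node is `(t - 1)(1 - 2 ly) + ly`
    have : (N : ℝ) ≤ 3 * j := by exact_mod_cast (by omega : N ≤ 3 * j)
    have : 3 * (j : ℝ) ≤ 2 * N := by exact_mod_cast (by omega : 3 * j ≤ 2 * N)
    have key : 3 * (j : ℝ) / N - 1 - 3 * (2 * j - N) * ly / N =
        ((3 * j - N) * (1 - 2 * ly) + N * ly) / N := by
      field_simp
      ring
    rw [key]
    constructor
    · exact div_nonneg (by nlinarith) hN'.le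
    · rw [div_le_one hN']
      nlinarith
  · have : (N : ℝ) ≤ 3 * j := by exact_mod_cast (by omega : N ≤ 3 * j)
    constructor
    · rw [sub_nonneg, div_le_one hN']
      nlinarith
    · rw [sub_le_self_iff]
      exact div_nonneg (mul_nonneg (by linarith) hly) hN'.le

/-- For even `N` the transition point `1 - lx` is the mesh line `x_{N/2}`, so no cell straddles it. -/
lemma meshRect_subset_of_mem_interior (hN : 0 < N) (hN2 : Even N) (hlx : 0 ≤ lx)
    (hlx' : lx ≤ 1) (hly : 0 ≤ ly) (hly' : ly ≤ 1 / 2) {i j : ℕ} (hiN : i ≤ N) (hjN : j ≤ N)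
    {p : ℝ × ℝ} (hp : p ∈ interior (meshRect N lx ly i j)) (hpx : p.1 ≤ 1 - lx) :
    meshRect N lx ly i j ⊆ Icc 0 (1 - lx) ×ˢ Icc 0 1 := by
  rw [meshRect, interior_prod_eq, interior_Icc, interior_Icc] at hp
  have hi : i ≤ N / 2 := by
    by_contra! h
    have := one_sub_le_meshX hN hN2 hlx (i := i - 1) (by omega) (by omega)
    linarith [hp.1.1]
  refine prod_mono (Icc_subset_Icc ?_ ?_) (Icc_subset_Icc ?_ ?_)
  · exact (meshX_mem_Icc hN hlx' (by omega)).1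
  · exact (meshX_mem_Icc hN hlx' hi).2
  · exact (meshY_mem_Icc hN hly hly' (by omega)).1
  · exact (meshY_mem_Icc hN hly hly' hjN).2

theorem abs_pdy_sub_meshInterpolant_le (hN : 0 < N) (hN2 : Even N) (hlx : 0 ≤ lx)
    (hlx' : lx ≤ 1) (hly : 0 ≤ ly) (hly' : ly ≤ 1 / 2) {f fI : ℝ × ℝ → ℝ} {M : ℝ}
    (hf : Differentiable ℝ f) (hI : IsMeshInterpolant N lx ly f fI)
    (hM : ∀ q ∈ Icc 0 (1 - lx) ×ˢ Icc 0 1, |pdy f q| ≤ M) {i j : ℕ} (hi : 1 ≤ i) (hiN : i ≤ N)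
    (hj : 1 ≤ j) (hjN : j ≤ N) {p : ℝ × ℝ}
    (hp : p ∈ interior (meshRect N lx ly i j) ∩ Omega2R lx ly) :
    |pdy (fun q => f q - fI q) p| ≤ 2 * M :=
  have hsub := meshRect_subset_of_mem_interior hN hN2 hlx hlx' hly hly' hiN hjN hp.1 hp.2.1.2
  abs_pdy_sub_bilinear_interp_le hf (hI.2.1 i j hi hiN hj hjN)
    (hI.2.2 _ _ (by omega) (by omega)) (hI.2.2 _ _ (by omega) hjN)
    (hI.2.2 _ _ hiN (by omega)) (hI.2.2 _ _ hiN hjN) (fun q hq => hM q (hsub hq)) hp.1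

end ShishkinMesh

lemma exp_neg_div_le_rpow {β ε ρ x N : ℝ} (hβ : 0 < β) (hε : 0 < ε) (hN : 0 < N)
    (hx : ρ * ε / β * log N ≤ 1 - x) : exp (-β * (1 - x) / ε) ≤ N ^ (-ρ) := by
  have h : ρ * ε * log N ≤ β * (1 - x) := by
    rw [div_mul_eq_mul_div, div_le_iff₀ hβ] at hx
    linarith
  rw [rpow_def_of_pos hN, exp_le_exp, div_le_iff₀ hε]
  linarith

lemma exp_neg_div_add_exp_neg_div_le_two {y s : ℝ} (hy : y ∈ Icc 0 1) (hs : 0 ≤ s) :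
    exp (-y / s) + exp (-(1 - y) / s) ≤ 2 := by
  have h₀ : exp (-y / s) ≤ 1 :=
    exp_le_one_iff.2 (div_nonpos_of_nonpos_of_nonneg (by linarith [hy.1]) hs)
  have h₁ : exp (-(1 - y) / s) ≤ 1 :=
    exp_le_one_iff.2 (div_nonpos_of_nonpos_of_nonneg (by linarith [hy.2]) hs)
  linarith

namespace ShishkinHyp

variable {N : ℕ} {ε β lx ly C0 : ℝ}

lemma exp_le_rpow (hS : ShishkinHyp N ε β lx ly) {x : ℝ} (hx : x ≤ 1 - lx) :
    exp (-β * (1 - x) / ε) ≤ (N : ℝ) ^ (-(5 / 2 : ℝ)) := by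
  obtain ⟨hN, -, hε, -, hβ, hlx, -⟩ := hS
  exact exp_neg_div_le_rpow hβ hε (Nat.cast_pos.2 hN) (by rw [hlx] at hx; norm_num; linarith)

lemma lx_nonneg (hS : ShishkinHyp N ε β lx ly) : 0 ≤ lx := by
  obtain ⟨-, -, hε, -, hβ, rfl, -⟩ := hS
  positivity

lemma ly_nonneg (hS : ShishkinHyp N ε β lx ly) : 0 ≤ ly := by
  obtain ⟨-, -, -, -, -, -, rfl, -⟩ := hS
  positivity

lemma mem_unitSq (hS : ShishkinHyp N ε β lx ly) {q : ℝ × ℝ}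
    (hq : q ∈ Icc 0 (1 - lx) ×ˢ Icc 0 1) : q ∈ UnitSq :=
  prod_mono (Icc_subset_Icc le_rfl (by linarith [hS.lx_nonneg])) le_rfl hq

lemma abs_pdy_le_of_boundE1 (hS : ShishkinHyp N ε β lx ly) (hC0 : 0 ≤ C0) {E1 : ℝ × ℝ → ℝ}
    (hE1 : BoundE1 ε β C0 E1) (q : ℝ × ℝ) (hq : q ∈ Icc 0 (1 - lx) ×ˢ Icc 0 1) :
    |pdy E1 q| ≤ C0 * (N : ℝ) ^ (-(5 / 2 : ℝ)) := by
  have h := hE1.2 0 1 (by norm_num) q (hS.mem_unitSq hq)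
  simp only [Nat.cast_zero, neg_zero, rpow_zero, mul_one] at h
  exact h.trans (mul_le_mul_of_nonneg_left (hS.exp_le_rpow hq.1.2) hC0)

lemma abs_pdy_le_of_boundE12 (hS : ShishkinHyp N ε β lx ly) (hC0 : 0 ≤ C0) {E12 : ℝ × ℝ → ℝ}
    (hE12 : BoundE12 ε β C0 E12) (q : ℝ × ℝ) (hq : q ∈ Icc 0 (1 - lx) ×ˢ Icc 0 1) :
    |pdy E12 q| ≤ 2 * C0 * ε ^ (-(1 / 2 : ℝ)) * (N : ℝ) ^ (-(5 / 2 : ℝ)) := by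
  have h := hE12.2 0 1 (by norm_num) q (hS.mem_unitSq hq)
  simp only [Nat.cast_zero, Nat.cast_one, zero_add] at h
  have hCε : 0 ≤ C0 * ε ^ (-(1 / 2 : ℝ)) := mul_nonneg hC0 (rpow_nonneg hS.2.2.1.le _)
  calc |pdy E12 q| ≤ C0 * ε ^ (-(1 / 2 : ℝ)) * exp (-β * (1 - q.1) / ε) *
        (exp (-q.2 / √ε) + exp (-(1 - q.2) / √ε)) := h
    _ ≤ C0 * ε ^ (-(1 / 2 : ℝ)) * (N : ℝ) ^ (-(5 / 2 : ℝ)) * 2 := by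
        gcongr
        · exact hS.exp_le_rpow hq.1.2
        · exact exp_neg_div_add_exp_neg_div_le_two hq.2 (sqrt_nonneg ε)
    _ = 2 * C0 * ε ^ (-(1 / 2 : ℝ)) * (N : ℝ) ^ (-(5 / 2 : ℝ)) := by ring

theorem abs_pdy_sub_meshInterpolant_le (hS : ShishkinHyp N ε β lx ly) {f fI : ℝ × ℝ → ℝ}
    {M : ℝ} (hf : Differentiable ℝ f) (hI : IsMeshInterpolant N lx ly f fI)
    (hM : ∀ q ∈ Icc 0 (1 - lx) ×ˢ Icc 0 1, |pdy f q| ≤ M) {i j : ℕ} (hi : 1 ≤ i) (hiN : i ≤ N)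
    (hj : 1 ≤ j) (hjN : j ≤ N) {p : ℝ × ℝ}
    (hp : p ∈ interior (meshRect N lx ly i j) ∩ Omega2R lx ly) :
    |pdy (fun q => f q - fI q) p| ≤ 2 * M := by
  have hlx₀ := hS.lx_nonneg
  have hly₀ := hS.ly_nonneg
  obtain ⟨hN, h6, -, -, -, -, -, hlx, hly⟩ := hS
  have hN2 : Even N := even_iff_two_dvd.2 ((by norm_num : 2 ∣ 6).trans h6)
  exact _root_.abs_pdy_sub_meshInterpolant_le hN hN2 hlx₀ (by linarith) hly₀ (by linarith) hf hI
    hM hi hiN hj hjN hp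

end ShishkinHyp

theorem layer_interpolation_y_deriv_general (β C0 : ℝ) (hC0 : 0 < C0) :
    ∃ C : ℝ, 0 < C ∧
      ∀ (N : ℕ) (ε lx ly : ℝ) (E1 E12 EI1 EI12 : ℝ × ℝ → ℝ),
        ShishkinHyp N ε β lx ly →
        BoundE1 ε β C0 E1 → BoundE12 ε β C0 E12 →
        IsMeshInterpolant N lx ly E1 EI1 →
        IsMeshInterpolant N lx ly E12 EI12 →
        (∀ i j : ℕ, 1 ≤ i → i ≤ N → 1 ≤ j → j ≤ N →
          ∀ p ∈ interior (meshRect N lx ly i j) ∩ Omega2R lx ly,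
            |pdy (fun q => E1 q - EI1 q) p| ≤ C * (N : ℝ) ^ (-(5 / 2 : ℝ))) ∧
        (∀ i j : ℕ, 1 ≤ i → i ≤ N → 1 ≤ j → j ≤ N →
          ∀ p ∈ interior (meshRect N lx ly i j) ∩ Omega2R lx ly,
            |pdy (fun q => E12 q - EI12 q) p|
              ≤ C * ε ^ (-(1 / 2 : ℝ)) * (N : ℝ) ^ (-(5 / 2 : ℝ))) := by
  refine ⟨4 * C0, by positivity, fun N ε lx ly E1 E12 EI1 EI12 hS hE1 hE12 hI1 hI12 => ⟨?_, ?_⟩⟩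
  · intro i j hi hiN hj hjN p hp
    have h := hS.abs_pdy_sub_meshInterpolant_le (hE1.1.differentiable (by norm_num)) hI1
      (hS.abs_pdy_le_of_boundE1 hC0.le hE1) hi hiN hj hjN hp
    have hN : 0 ≤ (N : ℝ) ^ (-(5 / 2 : ℝ)) := rpow_nonneg (Nat.cast_nonneg N) _
    nlinarith
  · intro i j hi hiN hj hjN p hp
    have h := hS.abs_pdy_sub_meshInterpolant_le (hE12.1.differentiable (by norm_num)) hI12
      (hS.abs_pdy_le_of_boundE12 hC0.le hE12) hi hiN hj hjN hp
    linarith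

/-- `‖(E₁ − E₁^I)_y‖_{L^∞(Ω₂)} ≤ C N^{-5/2}` and
`‖(E₁₂ − E₁₂^I)_y‖_{L^∞(Ω₂)} ≤ C ε^{-1/2} N^{-5/2}` (derivatives of the piecewise bilinear
interpolants are taken rectangle-by-rectangle, i.e. on the interiors of mesh rectangles). -/
theorem layer_interpolation_y_deriv (β C0 : ℝ) (hβ : 0 < β) (hC0 : 0 < C0) :
    ∃ C : ℝ, 0 < C ∧
      ∀ (N : ℕ) (ε lx ly : ℝ) (E1 E12 EI1 EI12 : ℝ × ℝ → ℝ),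
        ShishkinHyp N ε β lx ly →
        BoundE1 ε β C0 E1 → BoundE12 ε β C0 E12 →
        IsMeshInterpolant N lx ly E1 EI1 →
        IsMeshInterpolant N lx ly E12 EI12 →
        (∀ i j : ℕ, 1 ≤ i → i ≤ N → 1 ≤ j → j ≤ N →
          ∀ p ∈ interior (meshRect N lx ly i j) ∩ Omega2R lx ly,
            |pdy (fun q => E1 q - EI1 q) p| ≤ C * (N : ℝ) ^ (-(5 / 2 : ℝ))) ∧
        (∀ i j : ℕ, 1 ≤ i → i ≤ N → 1 ≤ j → j ≤ N →
          ∀ p ∈ interior (meshRect N lx ly i j) ∩ Omega2R lx ly,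
            |pdy (fun q => E12 q - EI12 q) p|
              ≤ C * ε ^ (-(1 / 2 : ℝ)) * (N : ℝ) ^ (-(5 / 2 : ℝ))) :=
  layer_interpolation_y_deriv_general β C0 hC0
end
end

section
/- There exists a constant C, independent of ε and N, such that ‖(E_12)_x‖_{L^1(Ω_2)} ≤ C ε^{1/2} N^{-5/2} and ‖(E_12^I)_x‖_{L^1(Ω_2)} ≤ C ε^{1/2} N^{-5/2}, where the subscript x denotes the partial derivative with respect to x (taken rectangle-by-rectangle for the piecewise bilinear interpolant). -/
open MeasureTheory Real Set

noncomputable section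

/-!
On `[0,1]²` the bound on `∂ₓE₁₂` factorises as `g(x) · c(y)` with `g(x) = C₀ ε⁻¹ e^{-β(1-x)/ε}`
and `c(y) = e^{-y/√ε} + e^{-(1-y)/√ε}`. Since `e^{-βλₓ/ε} = N^{-5/2}`, the integral of `g` over
`[0, 1-λₓ]` is at most `C₀ β⁻¹ N^{-5/2}`, and the integral of `c` over `[0,1]` is at most `2√ε`;
this gives the estimate for `E₁₂`.

On a mesh rectangle `τ`, `∂ₓE^I = b + d y` is affine in `y`, hence bounded by its values on the
two horizontal edges of `τ`, which are difference quotients of `E₁₂`. Writing these as integrals of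
`∂ₓE₁₂` along the edges and using that in `Ω₂` the mesh width in `y` is at most `(15/2)√ε`, so
that `c` varies by a factor at most `e^{15/2}` across `τ`, gives
`∫_τ |∂ₓE^I| ≤ e^{15/2} ∫_τ g(x) c(y)`. Summing over the rectangles of `Ω₂` reduces the second
estimate to the first.
-/

open Topology

theorem Icc_subset_biUnion_Icc_succ {α : Type*} [LinearOrder α] (u : ℕ → α) {n : ℕ}
    (hn : 0 < n) : Icc (u 0) (u n) ⊆ ⋃ k ∈ Finset.range n, Icc (u k) (u (k + 1)) := by
  induction n, hn using Nat.le_induction with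
  | base => simp
  | succ n _ ih =>
    refine (Icc_subset_Icc_union_Icc (b := u n)).trans (union_subset ?_ ?_)
    · exact ih.trans (biUnion_subset_biUnion_left (by simp))
    · exact subset_biUnion_of_mem (u := fun k => Icc (u k) (u (k + 1))) (by simp)

theorem lintegral_biUnion_finset_le {α ι : Type*} [MeasurableSpace α] {μ : Measure α}
    (s : Finset ι) (t : ι → Set α) (f : α → ENNReal) :
    ∫⁻ a in ⋃ i ∈ s, t i, f a ∂μ ≤ ∑ i ∈ s, ∫⁻ a in t i, f a ∂μ := by
  rw [← Finset.tsum_subtype, ← Finset.set_biUnion_coe, biUnion_eq_iUnion]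
  exact lintegral_iUnion_le _ _

theorem integral_abs_union_le {α : Type*} [MeasurableSpace α] {μ : Measure α} {f : α → ℝ}
    {s t : Set α} {M₀ M₁ : ℝ}
    (hs : ∫⁻ x in s, ENNReal.ofReal |f x| ∂μ ≤ ENNReal.ofReal M₀)
    (ht : ∫⁻ x in t, ENNReal.ofReal |f x| ∂μ ≤ ENNReal.ofReal M₁) (hM₀ : 0 ≤ M₀)
    (hM₁ : 0 ≤ M₁) : ∫ x in s ∪ t, |f x| ∂μ ≤ M₀ + M₁ := by
  refine (le_abs_self _).trans ((norm_integral_le_lintegral_norm (fun x => |f x|)).trans ?_)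
  simp only [Real.norm_eq_abs, abs_abs]
  refine ENNReal.toReal_le_of_le_ofReal (by positivity) ?_
  rw [ENNReal.ofReal_add hM₀ hM₁]
  exact (lintegral_union_le _ _ _).trans (add_le_add hs ht)

theorem integral_add_integral_le_of_nonneg {f : ℝ → ℝ} {a b c d : ℝ} (hbc : b ≤ c)
    (hf : Continuous f) (hf_nonneg : ∀ x, 0 ≤ f x) :
    (∫ x in a..b, f x) + ∫ x in c..d, f x ≤ ∫ x in a..d, f x := by
  have hsplit := intervalIntegral.integral_add_adjacent_intervals (μ := volume) (a := a)
    (b := b) (c := d) (hf.intervalIntegrable _ _) (hf.intervalIntegrable _ _)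
  have hsplit' := intervalIntegral.integral_add_adjacent_intervals (μ := volume) (a := b)
    (b := c) (c := d) (hf.intervalIntegrable _ _) (hf.intervalIntegrable _ _)
  have := intervalIntegral.integral_nonneg (μ := volume) hbc fun x _ => hf_nonneg x
  linarith

theorem integral_exp_mul_add {c : ℝ} (hc : c ≠ 0) (d a b : ℝ) :
    ∫ x in a..b, exp (c * x + d) = (exp (c * b + d) - exp (c * a + d)) / c := by
  rw [intervalIntegral.integral_comp_mul_add (fun x => exp x) hc, integral_exp, smul_eq_mul,
    inv_mul_eq_div]

def exponentialLayer (β ε x : ℝ) : ℝ := exp (-β * (1 - x) / ε)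

def characteristicLayer (ε y : ℝ) : ℝ := exp (-y / √ε) + exp (-(1 - y) / √ε)

theorem continuous_exponentialLayer (β ε : ℝ) : Continuous (exponentialLayer β ε) := by
  unfold exponentialLayer; fun_prop

theorem continuous_characteristicLayer (ε : ℝ) : Continuous (characteristicLayer ε) := by
  unfold characteristicLayer; fun_prop

theorem characteristicLayer_nonneg (ε y : ℝ) : 0 ≤ characteristicLayer ε y := by
  unfold characteristicLayer; positivity

theorem integral_exponentialLayer {β ε : ℝ} (hβ : β ≠ 0) (hε : ε ≠ 0) (a b : ℝ) :
    ∫ x in a..b, exponentialLayer β ε x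
      = ε / β * (exponentialLayer β ε b - exponentialLayer β ε a) := by
  have h : ∀ x, -β * (1 - x) / ε = β / ε * x + -(β / ε) := fun x => by field_simp; ring
  simp only [exponentialLayer, h]
  rw [integral_exp_mul_add (div_ne_zero hβ hε)]
  field_simp

theorem integral_characteristicLayer_le {ε : ℝ} (hε : 0 < ε) :
    ∫ y in (0 : ℝ)..1, characteristicLayer ε y ≤ 2 * √ε := by
  have hs : 0 < √ε := sqrt_pos.2 hε
  have h : ∀ y, characteristicLayer ε y
      = exp (-(1 / √ε) * y + 0) + exp (1 / √ε * y + -(1 / √ε)) := fun y => by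
    rw [characteristicLayer]; congr 2 <;> field_simp <;> ring
  simp only [h]
  rw [intervalIntegral.integral_add (Continuous.intervalIntegrable (by fun_prop) _ _)
      (Continuous.intervalIntegrable (by fun_prop) _ _),
    integral_exp_mul_add (neg_ne_zero.2 (by positivity)), integral_exp_mul_add (by positivity)]
  simp only [mul_one, mul_zero, add_zero, zero_add, add_neg_cancel, exp_zero]
  have hr : 0 < exp (-(1 / √ε)) := exp_pos _
  have : (exp (-(1 / √ε)) - 1) / -(1 / √ε) + (1 - exp (-(1 / √ε))) / (1 / √ε)
      = 2 * √ε * (1 - exp (-(1 / √ε))) := by field_simp; ring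
  rw [this]
  nlinarith

theorem characteristicLayer_le_exp_mul {ε : ℝ} (hε : 0 < ε) (y y' : ℝ) :
    characteristicLayer ε y' ≤ exp (|y' - y| / √ε) * characteristicLayer ε y := by
  have hs : 0 < √ε := sqrt_pos.2 hε
  have hexp : ∀ u u' : ℝ, u' ≤ u + |y' - y| →
      exp (-u / √ε) ≤ exp (|y' - y| / √ε) * exp (-u' / √ε) := fun u u' h => by
    rw [← exp_add]
    exact exp_le_exp.2 (by rw [← add_div]; exact div_le_div_of_nonneg_right (by linarith) hs.le)
  rw [characteristicLayer, characteristicLayer, mul_add]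
  exact add_le_add (hexp _ _ (by linarith [neg_abs_le (y' - y)]))
    (hexp _ _ (by linarith [le_abs_self (y' - y)]))

theorem pdx_eq_of_eqOn_bilinear {f : ℝ × ℝ → ℝ} {s : Set (ℝ × ℝ)} {a b c d : ℝ}
    (hf : ∀ p ∈ s, f p = a + b * p.1 + c * p.2 + d * (p.1 * p.2)) {p : ℝ × ℝ}
    (hp : s ∈ 𝓝 p) : pdx f p = b + d * p.2 := by
  have h₁ : HasFDerivAt (fun q : ℝ × ℝ => q.1) (ContinuousLinearMap.fst ℝ ℝ ℝ) p :=
    hasFDerivAt_fst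
  have h₂ : HasFDerivAt (fun q : ℝ × ℝ => q.2) (ContinuousLinearMap.snd ℝ ℝ ℝ) p :=
    hasFDerivAt_snd
  have hq := (((hasFDerivAt_const a p).add (h₁.const_mul b)).add (h₂.const_mul c)).add
    ((h₁.mul h₂).const_mul d)
  rw [pdx, (hq.congr_of_eventuallyEq (Filter.eventually_of_mem hp hf)).fderiv]
  simp

theorem abs_add_mul_le_max {b d y₀ y₁ v : ℝ} (hv : v ∈ Icc y₀ y₁) :
    |b + d * v| ≤ max |b + d * y₀| |b + d * y₁| := by
  rcases le_total 0 d with hd | hd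
  · exact abs_le_max_abs_abs (by nlinarith [hv.1]) (by nlinarith [hv.2])
  · rw [max_comm]
    exact abs_le_max_abs_abs (by nlinarith [hv.2]) (by nlinarith [hv.1])

theorem IsBilinearOn.abs_pdx_mul_le {f : ℝ × ℝ → ℝ} {x₀ x₁ y₀ y₁ : ℝ}
    (hf : IsBilinearOn f (Icc x₀ x₁ ×ˢ Icc y₀ y₁)) {p : ℝ × ℝ}
    (hp : p ∈ Ioo x₀ x₁ ×ˢ Ioo y₀ y₁) :
    |pdx f p| * (x₁ - x₀)
      ≤ max |f (x₁, y₀) - f (x₀, y₀)| |f (x₁, y₁) - f (x₀, y₁)| := by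
  obtain ⟨a, b, c, d, hf⟩ := hf
  obtain ⟨⟨hx₀, hx₁⟩, hy₀, hy₁⟩ := hp
  have hnhds : Icc x₀ x₁ ×ˢ Icc y₀ y₁ ∈ 𝓝 p :=
    Filter.mem_of_superset ((isOpen_Ioo.prod isOpen_Ioo).mem_nhds ⟨⟨hx₀, hx₁⟩, hy₀, hy₁⟩)
      (prod_mono Ioo_subset_Icc_self Ioo_subset_Icc_self)
  have hedge : ∀ y ∈ Icc y₀ y₁, f (x₁, y) - f (x₀, y) = (b + d * y) * (x₁ - x₀) :=
    fun y hy => by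
      rw [hf _ ⟨⟨by linarith, le_rfl⟩, hy⟩, hf _ ⟨⟨le_rfl, by linarith⟩, hy⟩]
      ring
  have hx : 0 ≤ x₁ - x₀ := by linarith
  rw [pdx_eq_of_eqOn_bilinear hf hnhds, hedge _ (left_mem_Icc.2 (by linarith)),
    hedge _ (right_mem_Icc.2 (by linarith)), abs_mul, abs_mul, abs_of_nonneg hx,
    ← max_mul_of_nonneg _ _ hx]
  exact mul_le_mul_of_nonneg_right (abs_add_mul_le_max ⟨hy₀.le, hy₁.le⟩) hx

theorem abs_sub_le_integral_of_abs_pdx_le {E : ℝ × ℝ → ℝ} (hE : ContDiff ℝ 1 E)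
    {G : ℝ → ℝ} {x₀ x₁ y : ℝ} (hx : x₀ ≤ x₁) (hG : IntervalIntegrable G volume x₀ x₁)
    (hb : ∀ t ∈ Icc x₀ x₁, |pdx E (t, y)| ≤ G t) :
    |E (x₁, y) - E (x₀, y)| ≤ ∫ t in x₀..x₁, G t := by
  have hderiv : ∀ t, HasDerivAt (fun t => E (t, y)) (pdx E (t, y)) t := fun t =>
    (hE.differentiable one_ne_zero _).hasFDerivAt.comp_hasDerivAt t
      ((hasDerivAt_id t).prodMk (hasDerivAt_const t y))
  have hcont : Continuous fun t => pdx E (t, y) :=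
    ((hE.continuous_fderiv one_ne_zero).clm_apply continuous_const).comp (by fun_prop)
  rw [← intervalIntegral.integral_eq_sub_of_hasDerivAt (fun t _ => hderiv t)
    (hcont.intervalIntegrable _ _)]
  exact (intervalIntegral.abs_integral_le_integral_abs hx).trans
    (intervalIntegral.integral_mono_on hx (hcont.abs.intervalIntegrable _ _) hG hb)

theorem lintegral_abs_Icc_prod_Icc_le {f : ℝ × ℝ → ℝ} {x₀ x₁ y₀ y₁ M : ℝ} (hx : x₀ ≤ x₁)
    (hy : y₀ ≤ y₁) (hf : ∀ p ∈ Ioo x₀ x₁ ×ˢ Ioo y₀ y₁, |f p| ≤ M) :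
    ∫⁻ p in Icc x₀ x₁ ×ˢ Icc y₀ y₁, ENNReal.ofReal |f p|
      ≤ ENNReal.ofReal (M * ((x₁ - x₀) * (y₁ - y₀))) := by
  rw [Measure.volume_eq_prod, ← Measure.restrict_congr_set
    (Measure.set_prod_ae_eq Ioo_ae_eq_Icc Ioo_ae_eq_Icc)]
  refine (setLIntegral_mono measurable_const fun p hp =>
    ENNReal.ofReal_le_ofReal (hf p hp)).trans_eq ?_
  rw [setLIntegral_const, Measure.prod_prod, Real.volume_Ioo, Real.volume_Ioo,
    ← ENNReal.ofReal_mul (by linarith), ← ENNReal.ofReal_mul' (by nlinarith)]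

theorem lintegral_abs_le_integral_mul_integral {f : ℝ × ℝ → ℝ} {g₁ g₂ : ℝ → ℝ}
    {a b c d : ℝ} (hab : a ≤ b) (hcd : c ≤ d) (hg₁ : Continuous g₁) (hg₂ : Continuous g₂)
    (hbound : ∀ p ∈ Icc a b ×ˢ Icc c d, |f p| ≤ g₁ p.1 * g₂ p.2) :
    ∫⁻ p in Icc a b ×ˢ Icc c d, ENNReal.ofReal |f p|
      ≤ ENNReal.ofReal ((∫ x in a..b, g₁ x) * ∫ y in c..d, g₂ y) := by
  have hR : MeasurableSet (Icc a b ×ˢ Icc c d) := measurableSet_Icc.prod measurableSet_Icc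
  have hG : Continuous fun p : ℝ × ℝ => g₁ p.1 * g₂ p.2 := by fun_prop
  refine (setLIntegral_mono' hR fun p hp =>
    ENNReal.ofReal_le_ofReal (hbound p hp)).trans_eq ?_
  rw [← ofReal_integral_eq_lintegral_ofReal
    (hG.continuousOn.integrableOn_compact (isCompact_Icc.prod isCompact_Icc))
    ((ae_restrict_iff' hR).2 (Filter.Eventually.of_forall fun p hp =>
      (abs_nonneg _).trans (hbound p hp))),
    Measure.volume_eq_prod, setIntegral_prod_mul, integral_Icc_eq_integral_Ioc,
    integral_Icc_eq_integral_Ioc, ← intervalIntegral.integral_of_le hab,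
    ← intervalIntegral.integral_of_le hcd]

theorem lintegral_abs_pdx_le_of_isBilinearOn {E EI : ℝ × ℝ → ℝ} {g₁ g₂ : ℝ → ℝ}
    {x₀ x₁ y₀ y₁ K : ℝ} (hx : x₀ < x₁) (hy : y₀ < y₁) (hE : ContDiff ℝ 1 E)
    (hg₁ : Continuous g₁) (hg₂ : Continuous g₂) (hg₁_nonneg : ∀ x, 0 ≤ g₁ x)
    (hbound : ∀ p ∈ Icc x₀ x₁ ×ˢ Icc y₀ y₁, |pdx E p| ≤ g₁ p.1 * g₂ p.2)
    (hK : ∀ y ∈ Icc y₀ y₁, ∀ y' ∈ Icc y₀ y₁, g₂ y' ≤ K * g₂ y)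
    (hEI : IsBilinearOn EI (Icc x₀ x₁ ×ˢ Icc y₀ y₁))
    (hnodes : ∀ x ∈ ({x₀, x₁} : Set ℝ), ∀ y ∈ ({y₀, y₁} : Set ℝ), EI (x, y) = E (x, y)) :
    ∫⁻ p in Icc x₀ x₁ ×ˢ Icc y₀ y₁, ENNReal.ofReal |pdx EI p|
      ≤ ENNReal.ofReal (K * (∫ x in x₀..x₁, g₁ x) * ∫ y in y₀..y₁, g₂ y) := by
  set A := ∫ x in x₀..x₁, g₁ x
  set B := ∫ y in y₀..y₁, g₂ y
  have hA : 0 ≤ A := intervalIntegral.integral_nonneg hx.le fun x _ => hg₁_nonneg x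
  have hedge : ∀ y ∈ ({y₀, y₁} : Set ℝ),
      |EI (x₁, y) - EI (x₀, y)| * (y₁ - y₀) ≤ K * A * B := by
    intro y hy_corner
    have hyI : y ∈ Icc y₀ y₁ := by
      rcases hy_corner with rfl | rfl
      exacts [left_mem_Icc.2 hy.le, right_mem_Icc.2 hy.le]
    have hdiff : |E (x₁, y) - E (x₀, y)| ≤ A * g₂ y := by
      rw [← intervalIntegral.integral_mul_const]
      exact abs_sub_le_integral_of_abs_pdx_le hE hx.le
        ((hg₁.mul continuous_const).intervalIntegrable _ _)
        fun t ht => hbound (t, y) ⟨ht, hyI⟩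
    have hslice : g₂ y * (y₁ - y₀) ≤ K * B := by
      rw [← intervalIntegral.integral_const_mul, mul_comm, ← smul_eq_mul,
        ← intervalIntegral.integral_const]
      exact intervalIntegral.integral_mono_on hy.le intervalIntegrable_const
        ((hg₂.intervalIntegrable _ _).const_mul K) fun y' hy' => hK y' hy' y hyI
    rw [hnodes _ (by simp) _ hy_corner, hnodes _ (by simp) _ hy_corner]
    calc |E (x₁, y) - E (x₀, y)| * (y₁ - y₀) ≤ A * g₂ y * (y₁ - y₀) :=
          mul_le_mul_of_nonneg_right hdiff (by linarith)
      _ ≤ K * A * B := by nlinarith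
  have hpoint : ∀ p ∈ Ioo x₀ x₁ ×ˢ Ioo y₀ y₁,
      |pdx EI p| ≤ K * A * B / ((x₁ - x₀) * (y₁ - y₀)) := fun p hp => by
    rw [le_div_iff₀ (by nlinarith), ← mul_assoc]
    refine (mul_le_mul_of_nonneg_right (hEI.abs_pdx_mul_le hp) (by linarith)).trans ?_
    rw [max_mul_of_nonneg _ _ (by linarith)]
    exact max_le (hedge _ (by simp)) (hedge _ (by simp))
  refine (lintegral_abs_Icc_prod_Icc_le hx.le hy.le hpoint).trans_eq ?_
  rw [div_mul_cancel₀ _ (by nlinarith)]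

def IsGridInterpolant (a dx c dy : ℝ) (m n : ℕ) (E EI : ℝ × ℝ → ℝ) : Prop :=
  (∀ i < m, ∀ j < n, IsBilinearOn EI
    (Icc (a + i * dx) (a + (i + 1) * dx) ×ˢ Icc (c + j * dy) (c + (j + 1) * dy))) ∧
  ∀ i ≤ m, ∀ j ≤ n, EI (a + i * dx, c + j * dy) = E (a + i * dx, c + j * dy)

theorem IsGridInterpolant.lintegral_abs_pdx_le {a dx c dy b d K : ℝ} {m n : ℕ}
    {E EI : ℝ × ℝ → ℝ} {g₁ g₂ : ℝ → ℝ} (hI : IsGridInterpolant a dx c dy m n E EI)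
    (hdx : 0 < dx) (hdy : 0 < dy) (hm : 0 < m) (hn : 0 < n) (hb : a + m * dx = b)
    (hd : c + n * dy = d) (hE : ContDiff ℝ 1 E) (hg₁ : Continuous g₁) (hg₂ : Continuous g₂)
    (hg₁_nonneg : ∀ x, 0 ≤ g₁ x) (hg₂_nonneg : ∀ y, 0 ≤ g₂ y) (hK_nonneg : 0 ≤ K)
    (hbound : ∀ p ∈ Icc a b ×ˢ Icc c d, |pdx E p| ≤ g₁ p.1 * g₂ p.2)
    (hK : ∀ y y', |y' - y| ≤ dy → g₂ y' ≤ K * g₂ y) :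
    ∫⁻ p in Icc a b ×ˢ Icc c d, ENNReal.ofReal |pdx EI p|
      ≤ ENNReal.ofReal (K * (∫ x in a..b, g₁ x) * ∫ y in c..d, g₂ y) := by
  set u : ℕ → ℝ := fun i => a + i * dx
  set v : ℕ → ℝ := fun j => c + j * dy
  set cells := Finset.range m ×ˢ Finset.range n
  have hu : ∀ i, u (i + 1) = a + (i + 1) * dx := fun i => by simp [u]
  have hv : ∀ j, v (j + 1) = c + (j + 1) * dy := fun j => by simp [v]
  have hcover : Icc a b ×ˢ Icc c d
      ⊆ ⋃ q ∈ cells, Icc (u q.1) (u (q.1 + 1)) ×ˢ Icc (v q.2) (v (q.2 + 1)) := by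
    rintro ⟨x, y⟩ ⟨hx, hy⟩
    have hux := Icc_subset_biUnion_Icc_succ u hm (by simpa [u, hb] using hx)
    have hvy := Icc_subset_biUnion_Icc_succ v hn (by simpa [v, hd] using hy)
    simp only [mem_iUnion, Finset.mem_product, cells] at hux hvy ⊢
    obtain ⟨i, hi, hxi⟩ := hux
    obtain ⟨j, hj, hyj⟩ := hvy
    exact ⟨(i, j), ⟨hi, hj⟩, hxi, hyj⟩
  have hcell : ∀ q ∈ cells,
      ∫⁻ p in Icc (u q.1) (u (q.1 + 1)) ×ˢ Icc (v q.2) (v (q.2 + 1)), ENNReal.ofReal |pdx EI p|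
        ≤ ENNReal.ofReal
          (K * (∫ x in u q.1..u (q.1 + 1), g₁ x) * ∫ y in v q.2..v (q.2 + 1), g₂ y) := by
    rintro ⟨i, j⟩ hq
    simp only [cells, Finset.mem_product, Finset.mem_range] at hq
    have hmi : ((i + 1 : ℕ) : ℝ) ≤ m := by exact_mod_cast hq.1
    have hnj : ((j + 1 : ℕ) : ℝ) ≤ n := by exact_mod_cast hq.2
    push_cast at hmi hnj
    have hstep : ∀ y ∈ Icc (v j) (v (j + 1)), ∀ y' ∈ Icc (v j) (v (j + 1)), |y' - y| ≤ dy :=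
      fun y hy y' hy' => by
        rw [abs_sub_le_iff]
        simp only [hv, v, mem_Icc] at hy hy'
        constructor <;> linarith
    refine lintegral_abs_pdx_le_of_isBilinearOn (by simp [u, hdx]) (by simp [v, hdy]) hE hg₁ hg₂
      hg₁_nonneg (fun p hp => hbound p ?_) (fun y hy y' hy' => hK y y' (hstep y hy y' hy'))
      (by rw [hu, hv]; exact hI.1 i hq.1 j hq.2) ?_
    · simp only [hu, hv, u, v, mem_prod, mem_Icc] at hp ⊢
      subst hb hd
      refine ⟨⟨?_, ?_⟩, ?_, ?_⟩ <;> nlinarith [(Nat.cast_nonneg i : (0 : ℝ) ≤ i),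
        (Nat.cast_nonneg j : (0 : ℝ) ≤ j)]
    · rintro x (rfl | rfl) y (rfl | rfl)
      all_goals exact hI.2 _ (by omega) _ (by omega)
  have hnonneg : ∀ q ∈ cells,
      0 ≤ K * (∫ x in u q.1..u (q.1 + 1), g₁ x) * ∫ y in v q.2..v (q.2 + 1), g₂ y :=
    fun q _ => by
      have hu_le : u q.1 ≤ u (q.1 + 1) := by rw [hu]; dsimp [u]; linarith
      have hv_le : v q.2 ≤ v (q.2 + 1) := by rw [hv]; dsimp [v]; linarith
      exact mul_nonneg (mul_nonneg hK_nonneg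
        (intervalIntegral.integral_nonneg hu_le fun x _ => hg₁_nonneg x))
        (intervalIntegral.integral_nonneg hv_le fun y _ => hg₂_nonneg y)
  have hsum₁ : ∑ i ∈ Finset.range m, ∫ x in u i..u (i + 1), g₁ x = ∫ x in a..b, g₁ x := by
    rw [intervalIntegral.sum_integral_adjacent_intervals fun i _ => hg₁.intervalIntegrable _ _]
    simp [u, hb]
  have hsum₂ : ∑ j ∈ Finset.range n, ∫ y in v j..v (j + 1), g₂ y = ∫ y in c..d, g₂ y := by
    rw [intervalIntegral.sum_integral_adjacent_intervals fun j _ => hg₂.intervalIntegrable _ _]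
    simp [v, hd]
  calc ∫⁻ p in Icc a b ×ˢ Icc c d, ENNReal.ofReal |pdx EI p|
      ≤ ∑ q ∈ cells, ∫⁻ p in Icc (u q.1) (u (q.1 + 1)) ×ˢ Icc (v q.2) (v (q.2 + 1)),
          ENNReal.ofReal |pdx EI p| :=
        (lintegral_mono_set hcover).trans (lintegral_biUnion_finset_le _ _ _)
    _ ≤ ∑ q ∈ cells, ENNReal.ofReal
          (K * (∫ x in u q.1..u (q.1 + 1), g₁ x) * ∫ y in v q.2..v (q.2 + 1), g₂ y) :=
        Finset.sum_le_sum hcell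
    _ = ENNReal.ofReal (K * (∫ x in a..b, g₁ x) * ∫ y in c..d, g₂ y) := by
        rw [← ENNReal.ofReal_sum_of_nonneg hnonneg, ← hsum₁, ← hsum₂, mul_assoc,
          Finset.sum_mul_sum, Finset.mul_sum, Finset.sum_product]
        simp only [Finset.mul_sum, mul_assoc]

theorem integral_abs_Omega2R_le {f : ℝ × ℝ → ℝ} {g h : ℝ → ℝ} {lx ly K : ℝ} (hlx : lx ≤ 1)
    (hly : 0 ≤ ly) (hly' : ly ≤ 1 - ly) (hK : 0 ≤ K) (hg : ∀ x, 0 ≤ g x) (hh : Continuous h)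
    (hh_nonneg : ∀ y, 0 ≤ h y)
    (h₀ : ∫⁻ p in Icc 0 (1 - lx) ×ˢ Icc 0 ly, ENNReal.ofReal |f p|
      ≤ ENNReal.ofReal (K * (∫ x in (0 : ℝ)..1 - lx, g x) * ∫ y in (0 : ℝ)..ly, h y))
    (h₁ : ∫⁻ p in Icc 0 (1 - lx) ×ˢ Icc (1 - ly) 1, ENNReal.ofReal |f p|
      ≤ ENNReal.ofReal (K * (∫ x in (0 : ℝ)..1 - lx, g x) * ∫ y in 1 - ly..1, h y)) :
    ∫ p in Omega2R lx ly, |f p| ≤ K * (∫ x in (0 : ℝ)..1 - lx, g x) * ∫ y in (0 : ℝ)..1, h y := by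
  have hA : 0 ≤ K * ∫ x in (0 : ℝ)..1 - lx, g x :=
    mul_nonneg hK (intervalIntegral.integral_nonneg (by linarith) fun x _ => hg x)
  rw [Omega2R, prod_union]
  have hB₁ : 0 ≤ ∫ y in 1 - ly..1, h y :=
    intervalIntegral.integral_nonneg (by linarith) fun y _ => hh_nonneg y
  refine (integral_abs_union_le h₀ h₁
    (mul_nonneg hA (intervalIntegral.integral_nonneg hly fun y _ => hh_nonneg y))
    (mul_nonneg hA hB₁)).trans ?_
  rw [← mul_add]
  exact mul_le_mul_of_nonneg_left (integral_add_integral_le_of_nonneg hly' hh hh_nonneg) hA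

theorem meshX_of_le {N : ℕ} {lx : ℝ} {i : ℕ} (hi : i ≤ N / 2) :
    meshX N lx i = i * (2 * (1 - lx) / N) := by
  rw [meshX, if_pos hi]; ring

theorem meshY_of_le {N : ℕ} {ly : ℝ} {j : ℕ} (hj : j ≤ N / 3) :
    meshY N ly j = j * (3 * ly / N) := by
  rw [meshY, if_pos hj]; ring

theorem meshY_two_thirds_add {N : ℕ} {ly : ℝ} {j : ℕ} (hN : 0 < N) (h6 : 6 ∣ N)
    (hj : j ≤ N / 3) : meshY N ly (2 * N / 3 + j) = 1 - ly + j * (3 * ly / N) := by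
  obtain ⟨m, rfl⟩ := h6
  have hm : (m : ℝ) ≠ 0 := by norm_cast; omega
  rcases Nat.eq_zero_or_pos j with rfl | hj₀
  · rw [meshY, if_neg (by omega), if_pos (by omega), (by omega : 2 * (6 * m) / 3 + 0 = 4 * m)]
    push_cast; field_simp; ring
  · rw [meshY, if_neg (by omega), if_neg (by omega), (by omega : 2 * (6 * m) / 3 = 4 * m)]
    push_cast; field_simp; ring

theorem IsMeshInterpolant.isGridInterpolant {N : ℕ} {lx ly a dx c dy : ℝ} {i₀ j₀ m n : ℕ}
    {E EI : ℝ × ℝ → ℝ} (hI : IsMeshInterpolant N lx ly E EI) (hm : i₀ + m ≤ N)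
    (hn : j₀ + n ≤ N) (hX : ∀ i ≤ m, meshX N lx (i₀ + i) = a + i * dx)
    (hY : ∀ j ≤ n, meshY N ly (j₀ + j) = c + j * dy) :
    IsGridInterpolant a dx c dy m n E EI := by
  refine ⟨fun i hi j hj => ?_, fun i hi j hj => ?_⟩
  · have h := hI.2.1 (i₀ + i + 1) (j₀ + j + 1) (by omega) (by omega) (by omega) (by omega)
    rwa [meshRect, Nat.add_sub_cancel, Nat.add_sub_cancel, hX i hi.le, add_assoc,
      hX (i + 1) hi, hY j hj.le, add_assoc, hY (j + 1) hj, Nat.cast_succ, Nat.cast_succ] at h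
  · have h := hI.2.2 (i₀ + i) (j₀ + j) (by omega) (by omega)
    rwa [hX i hi, hY j hj] at h

theorem BoundE12.abs_pdx_le {ε β C0 : ℝ} {E : ℝ × ℝ → ℝ} (h : BoundE12 ε β C0 E)
    {p : ℝ × ℝ} (hp : p ∈ UnitSq) :
    |pdx E p| ≤ C0 / ε * exponentialLayer β ε p.1 * characteristicLayer ε p.2 := by
  simpa [pd, rpow_neg_one, div_eq_mul_inv, exponentialLayer, characteristicLayer]
    using h.2 1 0 (by norm_num) p hp

namespace ShishkinHyp

variable {N : ℕ} {ε β lx ly : ℝ}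

theorem log_pos (h : ShishkinHyp N ε β lx ly) : 0 < log N :=
  Real.log_pos (by exact_mod_cast (Nat.le_of_dvd h.1 h.2.1).trans_lt' (by norm_num))

theorem lx_pos (h : ShishkinHyp N ε β lx ly) : 0 < lx := by
  have ⟨_, _, hε, _, hβ, hlx, _⟩ := h
  have := h.log_pos
  rw [hlx]
  positivity

theorem ly_pos (h : ShishkinHyp N ε β lx ly) : 0 < ly := by
  have ⟨_, _, hε, _, _, _, hly, _⟩ := h
  have := h.log_pos
  rw [hly]
  positivity

theorem exponentialLayer_one_sub (h : ShishkinHyp N ε β lx ly) :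
    exponentialLayer β ε (1 - lx) = (N : ℝ) ^ (-(5 / 2 : ℝ)) := by
  obtain ⟨hN, -, hε, -, hβ, hlx, -⟩ := h
  rw [exponentialLayer, rpow_def_of_pos (by exact_mod_cast hN), hlx]
  congr 1
  field_simp
  ring

theorem integral_exponentialLayer_le (h : ShishkinHyp N ε β lx ly) :
    ∫ x in (0 : ℝ)..1 - lx, exponentialLayer β ε x ≤ ε / β * (N : ℝ) ^ (-(5 / 2 : ℝ)) := by
  have ⟨_, _, hε, _, hβ, _⟩ := h
  rw [integral_exponentialLayer hβ.ne' hε.ne', h.exponentialLayer_one_sub]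
  exact mul_le_mul_of_nonneg_left (sub_le_self _ (exp_pos _).le) (by positivity)

theorem meshY_step_le (h : ShishkinHyp N ε β lx ly) : 3 * ly / N ≤ 15 / 2 * √ε := by
  obtain ⟨hN, -, hε, -, -, -, hly, -⟩ := h
  have hN' : (0 : ℝ) < N := by exact_mod_cast hN
  rw [div_le_iff₀ hN', hly]
  have := log_le_sub_one_of_pos hN'
  have := sqrt_nonneg ε
  nlinarith

theorem mul_integral_mul_integral_le (h : ShishkinHyp N ε β lx ly) {C0 K : ℝ} (hC0 : 0 ≤ C0)
    (hK : K ≤ exp (15 / 2)) :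
    K * (∫ x in (0 : ℝ)..1 - lx, C0 / ε * exponentialLayer β ε x)
        * ∫ y in (0 : ℝ)..1, characteristicLayer ε y
      ≤ 2 * C0 / β * exp (15 / 2) * ε ^ ((1 : ℝ) / 2) * (N : ℝ) ^ (-(5 / 2 : ℝ)) := by
  have ⟨_, _, hε, _, hβ, _, _, hlx, _⟩ := h
  have hA_nonneg : 0 ≤ ∫ x in (0 : ℝ)..1 - lx, C0 / ε * exponentialLayer β ε x :=
    intervalIntegral.integral_nonneg (by linarith) fun x _ =>
      mul_nonneg (by positivity) (exp_pos _).le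
  have hA : ∫ x in (0 : ℝ)..1 - lx, C0 / ε * exponentialLayer β ε x
      ≤ C0 / β * (N : ℝ) ^ (-(5 / 2 : ℝ)) :=
    calc _ = C0 / ε * ∫ x in (0 : ℝ)..1 - lx, exponentialLayer β ε x :=
          intervalIntegral.integral_const_mul _ _
      _ ≤ C0 / ε * (ε / β * (N : ℝ) ^ (-(5 / 2 : ℝ))) :=
          mul_le_mul_of_nonneg_left h.integral_exponentialLayer_le (by positivity)
      _ = C0 / β * (N : ℝ) ^ (-(5 / 2 : ℝ)) := by field_simp
  calc _ ≤ exp (15 / 2) * (C0 / β * (N : ℝ) ^ (-(5 / 2 : ℝ))) * (2 * √ε) :=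
        mul_le_mul (mul_le_mul hK hA hA_nonneg (exp_pos _).le)
          (integral_characteristicLayer_le hε)
          (intervalIntegral.integral_nonneg zero_le_one fun y _ => characteristicLayer_nonneg ε y)
          (by positivity)
    _ = _ := by rw [sqrt_eq_rpow]; ring

end ShishkinHyp

theorem IsMeshInterpolant.lintegral_abs_pdx_layer_le {N : ℕ} {ε β lx ly c d : ℝ} {j₀ : ℕ}
    {E EI : ℝ × ℝ → ℝ} {g : ℝ → ℝ} (hI : IsMeshInterpolant N lx ly E EI)
    (hS : ShishkinHyp N ε β lx ly) (hE : ContDiff ℝ 1 E) (hg : Continuous g)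
    (hg_nonneg : ∀ x, 0 ≤ g x) (hj₀ : j₀ + N / 3 ≤ N)
    (hY : ∀ j ≤ N / 3, meshY N ly (j₀ + j) = c + j * (3 * ly / N)) (hd : c + ly = d)
    (hbound : ∀ p ∈ Icc 0 (1 - lx) ×ˢ Icc c d,
      |pdx E p| ≤ g p.1 * characteristicLayer ε p.2) :
    ∫⁻ p in Icc 0 (1 - lx) ×ˢ Icc c d, ENNReal.ofReal |pdx EI p|
      ≤ ENNReal.ofReal (exp (15 / 2) * (∫ x in (0 : ℝ)..1 - lx, g x)
          * ∫ y in c..d, characteristicLayer ε y) := by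
  have ⟨hN, h6, hε, _, _, _, _, hlx, _⟩ := hS
  have hNR : (0 : ℝ) < N := by exact_mod_cast hN
  have hly := hS.ly_pos
  have hN6 := Nat.le_of_dvd hN h6
  refine (hI.isGridInterpolant (i₀ := 0) (m := N / 2) (n := N / 3) (by omega) hj₀
    (fun i hi => by rw [zero_add, meshX_of_le hi, zero_add]) hY).lintegral_abs_pdx_le
    (by apply div_pos <;> linarith) (by positivity) (by omega) (by omega) ?_ ?_ hE hg
    (continuous_characteristicLayer ε) hg_nonneg (characteristicLayer_nonneg ε) (exp_pos _).le
    hbound fun y y' hyy' => ?_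
  · rw [Nat.cast_div (Nat.dvd_trans (by norm_num) h6) two_ne_zero]
    field_simp
    ring
  · rw [Nat.cast_div (Nat.dvd_trans (by norm_num) h6) three_ne_zero, ← hd]
    field_simp
    push_cast
    ring
  · refine (characteristicLayer_le_exp_mul hε y y').trans
      (mul_le_mul_of_nonneg_right (exp_le_exp.2 ?_) (characteristicLayer_nonneg ε y))
    rw [div_le_iff₀ (sqrt_pos.2 hε)]
    exact hyy'.trans hS.meshY_step_le

/-- `‖(E₁₂)_x‖_{L^1(Ω₂)} ≤ C ε^{1/2} N^{-5/2}` and `‖(E₁₂^I)_x‖_{L^1(Ω₂)} ≤ C ε^{1/2} N^{-5/2}`. -/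
theorem corner_layer_x_deriv_L1 (β C0 : ℝ) (hβ : 0 < β) (hC0 : 0 < C0) :
    ∃ C : ℝ, 0 < C ∧
      ∀ (N : ℕ) (ε lx ly : ℝ) (E12 EI12 : ℝ × ℝ → ℝ),
        ShishkinHyp N ε β lx ly →
        BoundE12 ε β C0 E12 →
        IsMeshInterpolant N lx ly E12 EI12 →
        (∫ p in Omega2R lx ly, |pdx E12 p|
          ≤ C * ε ^ ((1 : ℝ) / 2) * (N : ℝ) ^ (-(5 / 2 : ℝ))) ∧
        (∫ p in Omega2R lx ly, |pdx EI12 p|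
          ≤ C * ε ^ ((1 : ℝ) / 2) * (N : ℝ) ^ (-(5 / 2 : ℝ))) := by
  refine ⟨2 * C0 / β * exp (15 / 2), by positivity, ?_⟩
  intro N ε lx ly E12 EI12 hS hB hI
  have ⟨hN, h6, hε, _, _, _, _, hlx, hly⟩ := hS
  have hly_pos := hS.ly_pos
  set g : ℝ → ℝ := fun x => C0 / ε * exponentialLayer β ε x
  have hg : Continuous g := continuous_const.mul (continuous_exponentialLayer β ε)
  have hg_nonneg : ∀ x, 0 ≤ g x := fun x => mul_nonneg (by positivity) (exp_pos _).le
  have hbound : ∀ p ∈ Icc 0 (1 - lx) ×ˢ Icc 0 1, |pdx E12 p| ≤ g p.1 * characteristicLayer ε p.2 :=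
    fun p hp => BoundE12.abs_pdx_le hB ⟨⟨hp.1.1, by linarith [hS.lx_pos, hp.1.2]⟩, hp.2⟩
  have hbot : Icc 0 (1 - lx) ×ˢ Icc 0 ly ⊆ Icc 0 (1 - lx) ×ˢ Icc 0 1 :=
    prod_mono_right (Icc_subset_Icc_right (by linarith))
  have htop : Icc 0 (1 - lx) ×ˢ Icc (1 - ly) 1 ⊆ Icc 0 (1 - lx) ×ˢ Icc 0 1 :=
    prod_mono_right (Icc_subset_Icc_left (by linarith))
  have hE : ContDiff ℝ 1 E12 := hB.1.of_le (by norm_num)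
  constructor
  · refine (integral_abs_Omega2R_le (K := 1) (by linarith) hly_pos.le (by linarith) zero_le_one
      hg_nonneg (continuous_characteristicLayer ε) (characteristicLayer_nonneg ε) ?_ ?_).trans
      (hS.mul_integral_mul_integral_le hC0.le (one_le_exp (by norm_num)))
    all_goals rw [one_mul]
    · exact lintegral_abs_le_integral_mul_integral (by linarith) hly_pos.le hg
        (continuous_characteristicLayer ε) fun p hp => hbound p (hbot hp)
    · exact lintegral_abs_le_integral_mul_integral (by linarith) (by linarith) hg
        (continuous_characteristicLayer ε) fun p hp => hbound p (htop hp)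
  · exact (integral_abs_Omega2R_le (by linarith) hly_pos.le (by linarith) (exp_pos _).le
      hg_nonneg (continuous_characteristicLayer ε) (characteristicLayer_nonneg ε)
      (IsMeshInterpolant.lintegral_abs_pdx_layer_le (j₀ := 0) hI hS hE hg hg_nonneg (by omega)
        (fun j hj => by rw [zero_add, meshY_of_le hj, zero_add]) (zero_add ly)
        fun p hp => hbound p (hbot hp))
      (IsMeshInterpolant.lintegral_abs_pdx_layer_le (j₀ := 2 * N / 3) hI hS hE hg hg_nonneg
        (by omega) (fun j hj => meshY_two_thirds_add hN h6 hj) (sub_add_cancel 1 ly)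
        fun p hp => hbound p (htop hp))).trans
      (hS.mul_integral_mul_integral_le hC0.le le_rfl)
end
end
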